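/- arXiv:0803.2364 — 2 statements merged into one kernel-verified Lean document; each statement's English description precedes it below -/
import Mathlib

section
/- Let 0 < p ≤ q ≤ 1. The function f(t) = (p/q)·(t^q − 1)/(t^p − 1) (with f(1) = 1) is monotone increasing on (0, ∞). -/
/-!
With `c = t ^ p` and `r = q / p - 1 ≥ 0`, the substitution `x = 1 + (c - 1) l` in `∫₁ᶜ x ^ r dx`
gives `f t = ∫₀¹ (l c + 1 - l) ^ r dl`, also at `t = 1`. Each integrand is increasing in `c`,
and `c = t ^ p` is increasing in `t`.
-/

open Real

theorem integral_rpow_affine_unitInterval {c r : ℝ} (hc : 0 < c) (hc1 : c ≠ 1) (hr : r ≠ -1) :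
    ∫ l in (0 : ℝ)..1, (l * c + (1 - l)) ^ r = (c ^ (r + 1) - 1) / ((r + 1) * (c - 1)) := by
  have hc1' : c - 1 ≠ 0 := sub_ne_zero.mpr hc1
  have h0 : (0 : ℝ) ∉ Set.uIcc 1 c := by
    rw [Set.mem_uIcc]; rintro (h | h) <;> linarith [h.1, h.2]
  calc ∫ l in (0 : ℝ)..1, (l * c + (1 - l)) ^ r
      = ∫ l in (0 : ℝ)..1, ((c - 1) * l + 1) ^ r := by congr 1; ext l; ring_nf
    _ = (c - 1)⁻¹ * ∫ x in (1 : ℝ)..c, x ^ r := by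
        rw [intervalIntegral.integral_comp_mul_add (fun x => x ^ r) hc1']; simp
    _ = (c ^ (r + 1) - 1) / ((r + 1) * (c - 1)) := by
        rw [integral_rpow (Or.inr ⟨hr, h0⟩), one_rpow]; field_simp

theorem monotoneOn_integral_rpow_affine_unitInterval {r : ℝ} (hr : 0 ≤ r) :
    MonotoneOn (fun c => ∫ l in (0 : ℝ)..1, (l * c + (1 - l)) ^ r) (Set.Ici 0) := by
  have hbase : ∀ {c : ℝ}, 0 ≤ c → ∀ l ∈ Set.Icc (0 : ℝ) 1, 0 ≤ l * c + (1 - l) :=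
    fun hc l hl => by nlinarith [hl.1, hl.2]
  have hint : ∀ c : ℝ,
      IntervalIntegrable (fun l => (l * c + (1 - l)) ^ r) MeasureTheory.volume 0 1 :=
    fun c => (by fun_prop : Continuous fun l : ℝ => l * c + (1 - l)).continuousOn.rpow_const
      (fun _ _ => Or.inr hr) |>.intervalIntegrable
  intro a ha b _ hab
  refine intervalIntegral.integral_mono_on zero_le_one (hint a) (hint b) fun l hl => ?_
  exact rpow_le_rpow (hbase ha l hl) (by nlinarith [hl.1]) hr

theorem div_mul_rpow_sub_one_div_eq_integral {p q t : ℝ} (hp : p ≠ 0) (hq : q ≠ 0) (ht : 0 < t)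
    (ht1 : t ≠ 1) :
    p / q * (t ^ q - 1) / (t ^ p - 1) = ∫ l in (0 : ℝ)..1, (l * t ^ p + (1 - l)) ^ (q / p - 1) := by
  have htp : t ^ p ≠ 1 := by rwa [Ne, ← one_rpow p, rpow_left_inj ht.le zero_le_one hp]
  have htp' : t ^ p - 1 ≠ 0 := sub_ne_zero.mpr htp
  rw [integral_rpow_affine_unitInterval (rpow_pos_of_pos ht p) htp (by simp [hp, hq]),
    sub_add_cancel, ← rpow_mul ht.le, mul_div_cancel₀ q hp]
  field_simp

theorem stmt_14_general (p q : ℝ) (hp : 0 < p) (hpq : p ≤ q)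
    (f : ℝ → ℝ) (hf : ∀ t, f t = if t = 1 then 1 else p / q * (t ^ q - 1) / (t ^ p - 1)) :
    MonotoneOn f (Set.Ioi (0 : ℝ)) := by
  have hq : q ≠ 0 := (hp.trans_le hpq).ne'
  have hr : 0 ≤ q / p - 1 := sub_nonneg.mpr ((one_le_div hp).mpr hpq)
  have hf_eq : ∀ t ∈ Set.Ioi (0 : ℝ),
      f t = ∫ l in (0 : ℝ)..1, (l * t ^ p + (1 - l)) ^ (q / p - 1) := by
    intro t ht
    rcases eq_or_ne t 1 with rfl | ht1
    · simp [hf]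
    · rw [hf, if_neg ht1, div_mul_rpow_sub_one_div_eq_integral hp.ne' hq ht ht1]
  intro a ha b hb hab
  rw [hf_eq a ha, hf_eq b hb]
  exact monotoneOn_integral_rpow_affine_unitInterval hr (rpow_nonneg (le_of_lt ha) p)
    (rpow_nonneg (le_of_lt hb) p) (rpow_le_rpow (le_of_lt ha) hab hp.le)

theorem stmt_14 (p q : ℝ) (hp : 0 < p) (hpq : p ≤ q) (hq : q ≤ 1)
    (f : ℝ → ℝ) (hf : ∀ t, f t = if t = 1 then 1 else p / q * (t ^ q - 1) / (t ^ p - 1)) :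
    MonotoneOn f (Set.Ioi (0 : ℝ)) :=
  stmt_14_general p q hp hpq f hf
end

section
/- Let 0 < p ≤ q ≤ 1 with p < 1. Define μ'(λ) = (p/q)·(λ^{p+q}·sin((q−p)π) − λ^q·sin(qπ) + λ^p·sin(pπ)) / (π·(λ^{2p} − 2·λ^p·cos(pπ) + 1)) for λ > 0. Then μ'(λ) ≥ 0 for all λ > 0, and the integrals ∫_0^1 μ'(λ)/λ dλ and ∫_0^∞ μ'(λ)/(λ^2 + 1) dλ are finite. -/
/-!
Put `z s = l ^ s * exp (i π s)`. The numerator of `μ'` is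
`Im ((conj (z p) - 1) * (z q - 1))`, which is nonnegative because the argument of `z s - 1`
increases with `s ∈ (0, 1)`: its cotangent `spiralCot l s` has derivative of the sign of
`log l * sin (s π) + π * cos (s π) - π * l ^ s`, which is `≤ 0` by the tangent-line bound for
`exp` and `x² cos x ≤ 2 x sin x - sin² x`. The denominator `|z p - 1|²` is at least
`sin² (p π) * max 1 (l ^ (2 p))`, so `μ' l` is `O(l ^ p)` at `0` and `O(l ^ (q - p))` at `∞`.
-/

open Real Set MeasureTheory

lemma sin_mul_pi_pos {s : ℝ} (hs0 : 0 < s) (hs1 : s < 1) : 0 < sin (s * π) :=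
  sin_pos_of_pos_of_lt_pi (mul_pos hs0 pi_pos) (by nlinarith [pi_pos])

lemma sq_mul_cos_le_two_mul_mul_sin_sub_sin_sq {x : ℝ} (hx : 0 ≤ x) (hxπ : x ≤ π) :
    x ^ 2 * cos x ≤ 2 * x * sin x - sin x ^ 2 := by
  set f : ℝ → ℝ := fun y => 2 * y * sin y - sin y ^ 2 - y ^ 2 * cos y
  have hf' (y : ℝ) : HasDerivAt f (sin y * (2 - 2 * cos y + y ^ 2)) y := by
    have := ((((hasDerivAt_id' y).const_mul 2).fun_mul (hasDerivAt_sin y)).fun_sub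
      ((hasDerivAt_sin y).fun_pow 2)).fun_sub ((hasDerivAt_pow 2 y).fun_mul (hasDerivAt_cos y))
    refine this.congr_deriv ?_
    norm_num
    ring
  have hmono : MonotoneOn f (Icc 0 π) := by
    refine monotoneOn_of_deriv_nonneg (convex_Icc 0 π)
      (fun y _ => (hf' y).continuousAt.continuousWithinAt)
      (fun y _ => (hf' y).differentiableAt.differentiableWithinAt) fun y hy => ?_
    rw [interior_Icc] at hy
    rw [(hf' y).deriv]
    have := sin_nonneg_of_nonneg_of_le_pi hy.1.le hy.2.le
    have : 0 ≤ 2 - 2 * cos y + y ^ 2 := by nlinarith [cos_le_one y]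
    positivity
  simpa [f] using hmono (left_mem_Icc.2 pi_pos.le) ⟨hx, hxπ⟩ hx

lemma mul_sin_add_mul_cos_le_mul_exp {x : ℝ} (hx : 0 < x) (hxπ : x < π) (t : ℝ) :
    t * sin x + x * cos x ≤ x * exp t := by
  -- the worst case is `exp t = sin x / x`, where `exp` touches its tangent line
  set a := sin x / x
  have ha : 0 < a := div_pos (sin_pos_of_pos_of_lt_pi hx hxπ) hx
  have htangent : a * (1 + t - log a) ≤ exp t := by
    have := add_one_le_exp (t - log a)
    rw [exp_sub, exp_log ha, le_div_iff₀ ha] at this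
    linarith
  have hlog : log a ≤ a - 1 := log_le_sub_one_of_pos ha
  have hsin : sin x = a * x := (div_mul_cancel₀ _ hx.ne').symm
  have := sq_mul_cos_le_two_mul_mul_sin_sub_sin_sq hx.le hxπ.le
  rw [hsin] at this ⊢
  nlinarith [mul_le_mul_of_nonneg_left hlog (mul_pos ha hx).le,
    mul_le_mul_of_nonneg_left htangent hx.le]

noncomputable def spiralCot (l s : ℝ) : ℝ :=
  (l ^ s * cos (s * π) - 1) / (l ^ s * sin (s * π))

lemma hasDerivAt_spiralCot {l s : ℝ} (hl : 0 < l) (hs : sin (s * π) ≠ 0) :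
    HasDerivAt (spiralCot l)
      ((log l * sin (s * π) + π * cos (s * π) - π * l ^ s) / (l ^ s * sin (s * π) ^ 2)) s := by
  have hpow := (hasStrictDerivAt_const_rpow hl s).hasDerivAt
  have hlin : HasDerivAt (fun y : ℝ => y * π) π s := by
    simpa using (hasDerivAt_id s).mul_const π
  have hnum := (hpow.fun_mul hlin.cos).sub_const 1
  have hden := hpow.fun_mul hlin.sin
  refine (hnum.div hden (mul_ne_zero (rpow_pos_of_pos hl s).ne' hs)).congr_deriv ?_
  have := (rpow_pos_of_pos hl s).ne'
  field_simp
  linear_combination (-(π * l ^ s)) * sin_sq_add_cos_sq (s * π)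

lemma spiralCot_antitoneOn {l : ℝ} (hl : 0 < l) : AntitoneOn (spiralCot l) (Ioo 0 1) := by
  have hderiv {s : ℝ} (hs : s ∈ Ioo (0 : ℝ) 1) :=
    hasDerivAt_spiralCot hl (sin_mul_pi_pos hs.1 hs.2).ne'
  refine antitoneOn_of_deriv_nonpos (convex_Ioo 0 1)
    (fun s hs => (hderiv hs).continuousAt.continuousWithinAt) ?_ fun s hs => ?_
  · rw [interior_Ioo]
    exact fun s hs => (hderiv hs).differentiableAt.differentiableWithinAt
  rw [interior_Ioo] at hs
  rw [(hderiv hs).deriv]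
  have hkey := mul_sin_add_mul_cos_le_mul_exp (mul_pos hs.1 pi_pos) (by nlinarith [hs.2, pi_pos])
    (s * log l)
  rw [mul_comm s, ← rpow_def_of_pos hl] at hkey
  have : log l * sin (s * π) + π * cos (s * π) ≤ π * l ^ s := by
    refine le_of_mul_le_mul_left ?_ hs.1
    linear_combination hkey
  exact div_nonpos_of_nonpos_of_nonneg (by linarith) (by positivity)

noncomputable def muNum (p q l : ℝ) : ℝ :=
  l ^ (p + q) * sin ((q - p) * π) - l ^ q * sin (q * π) + l ^ p * sin (p * π)

noncomputable def muDen (p l : ℝ) : ℝ :=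
  l ^ (2 * p) - 2 * l ^ p * cos (p * π) + 1

noncomputable def muDensity (p q l : ℝ) : ℝ :=
  p / q * muNum p q l / (π * muDen p l)

lemma muNum_eq_mul_spiralCot_sub {p q l : ℝ} (hl : 0 < l) (hp : sin (p * π) ≠ 0)
    (hq : sin (q * π) ≠ 0) :
    muNum p q l =
      l ^ p * sin (p * π) * (l ^ q * sin (q * π)) * (spiralCot l p - spiralCot l q) := by
  have := (rpow_pos_of_pos hl p).ne'
  have := (rpow_pos_of_pos hl q).ne'
  rw [muNum, spiralCot, spiralCot, rpow_add hl, sub_mul, sin_sub]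
  generalize sin (p * π) = a at *
  generalize sin (q * π) = b at *
  field_simp
  ring

lemma muNum_nonneg {p q l : ℝ} (hp : 0 < p) (hpq : p ≤ q) (hq : q ≤ 1) (hp1 : p < 1)
    (hl : 0 < l) : 0 ≤ muNum p q l := by
  have hsp := sin_mul_pi_pos hp hp1
  have := rpow_pos_of_pos hl p
  rcases hq.lt_or_eq with hq1 | rfl
  · have hq0 := hp.trans_le hpq
    have hsq := sin_mul_pi_pos hq0 hq1
    have := rpow_pos_of_pos hl q
    have := spiralCot_antitoneOn hl ⟨hp, hp1⟩ ⟨hq0, hq1⟩ hpq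
    have : 0 ≤ spiralCot l p - spiralCot l q := by linarith
    rw [muNum_eq_mul_spiralCot_sub hl hsp.ne' hsq.ne']
    positivity
  · -- at `q = 1` the factorization degenerates since `sin π = 0`
    have := rpow_pos_of_pos hl (p + 1)
    rw [muNum, one_sub_mul, sin_pi_sub, one_mul, sin_pi, mul_zero, sub_zero]
    positivity

lemma sin_sq_le_muDen (p : ℝ) {l : ℝ} (hl : 0 ≤ l) : sin (p * π) ^ 2 ≤ muDen p l := by
  rw [muDen, mul_comm 2 p, rpow_mul hl, rpow_two]
  nlinarith [sq_nonneg (l ^ p - cos (p * π)), sin_sq_add_cos_sq (p * π)]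

lemma sin_sq_mul_sq_le_muDen (p : ℝ) {l : ℝ} (hl : 0 ≤ l) :
    sin (p * π) ^ 2 * (l ^ p) ^ 2 ≤ muDen p l := by
  rw [muDen, mul_comm 2 p, rpow_mul hl, rpow_two]
  nlinarith [sq_nonneg (l ^ p * cos (p * π) - 1), sin_sq_add_cos_sq (p * π)]

lemma measurable_muDensity (p q : ℝ) : Measurable (muDensity p q) := by
  unfold muDensity muNum muDen
  fun_prop

lemma abs_muNum_le (p q : ℝ) {l : ℝ} (hl : 0 < l) :
    |muNum p q l| ≤ l ^ (p + q) + l ^ q + l ^ p := by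
  have hterm (s x : ℝ) : |l ^ s * sin x| ≤ l ^ s := by
    rw [abs_mul, abs_of_pos (rpow_pos_of_pos hl s)]
    exact mul_le_of_le_one_right (rpow_pos_of_pos hl s).le (abs_sin_le_one x)
  unfold muNum
  calc _ ≤ |l ^ (p + q) * sin ((q - p) * π) - l ^ q * sin (q * π)| + |l ^ p * sin (p * π)| :=
        abs_add_le _ _
    _ ≤ |l ^ (p + q) * sin ((q - p) * π)| + |l ^ q * sin (q * π)| + |l ^ p * sin (p * π)| := by
        gcongr
        exact abs_sub _ _
    _ ≤ _ := by gcongr <;> apply hterm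

lemma abs_muDensity_le_of_le_one {p q l : ℝ} (hp : 0 ≤ p) (hpq : p ≤ q)
    (hs : sin (p * π) ≠ 0) (hl : 0 < l) (hl1 : l ≤ 1) :
    |muDensity p q l| ≤ p / q * 3 / (π * sin (p * π) ^ 2) * l ^ p := by
  have hN : |muNum p q l| ≤ 3 * l ^ p := by
    have := rpow_le_rpow_of_exponent_ge hl hl1 (show p ≤ p + q by linarith)
    have := rpow_le_rpow_of_exponent_ge hl hl1 hpq
    linarith [abs_muNum_le p q hl]
  have hq : 0 ≤ q := hp.trans hpq
  have hD := sin_sq_le_muDen p hl.le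
  have : 0 < sin (p * π) ^ 2 := by positivity
  have : 0 < muDen p l := by linarith
  rw [muDensity, abs_div, abs_mul, abs_of_nonneg (by positivity : 0 ≤ p / q),
    abs_of_pos (by positivity : 0 < π * muDen p l)]
  calc p / q * |muNum p q l| / (π * muDen p l)
        ≤ p / q * (3 * l ^ p) / (π * sin (p * π) ^ 2) := by gcongr
    _ = _ := by ring

lemma abs_muDensity_le_of_one_le {p q l : ℝ} (hp : 0 ≤ p) (hpq : p ≤ q)
    (hs : sin (p * π) ≠ 0) (hl1 : 1 ≤ l) :
    |muDensity p q l| ≤ p / q * 3 / (π * sin (p * π) ^ 2) * l ^ (q - p) := by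
  have hl : 0 < l := one_pos.trans_le hl1
  have hN : |muNum p q l| ≤ 3 * l ^ (p + q) := by
    have := rpow_le_rpow_of_exponent_le hl1 (show q ≤ p + q by linarith)
    have := rpow_le_rpow_of_exponent_le hl1 (show p ≤ p + q by linarith)
    linarith [abs_muNum_le p q hl]
  have hq : 0 ≤ q := hp.trans hpq
  have hD := sin_sq_mul_sq_le_muDen p hl.le
  have : 0 < sin (p * π) ^ 2 * (l ^ p) ^ 2 := by have := rpow_pos_of_pos hl p; positivity
  have : 0 < muDen p l := by linarith
  have hsplit : l ^ (p + q) = l ^ (q - p) * (l ^ p) ^ 2 := by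
    rw [← rpow_natCast, ← rpow_mul hl.le, ← rpow_add hl]
    ring_nf
  rw [muDensity, abs_div, abs_mul, abs_of_nonneg (by positivity : 0 ≤ p / q),
    abs_of_pos (by positivity : 0 < π * muDen p l)]
  calc p / q * |muNum p q l| / (π * muDen p l)
        ≤ p / q * (3 * l ^ (p + q)) / (π * (sin (p * π) ^ 2 * (l ^ p) ^ 2)) := by
        gcongr
    _ = _ := by
        rw [hsplit]
        field_simp

lemma muDensity_nonneg {p q l : ℝ} (hp : 0 < p) (hpq : p ≤ q) (hq : q ≤ 1) (hp1 : p < 1)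
    (hl : 0 < l) : 0 ≤ muDensity p q l := by
  have := muNum_nonneg hp hpq hq hp1 hl
  have : 0 < sin (p * π) ^ 2 := pow_pos (sin_mul_pi_pos hp hp1) 2
  have := this.trans_le (sin_sq_le_muDen p hl.le)
  have := hp.trans_le hpq
  unfold muDensity
  positivity

lemma integrableOn_muDensity_div_self {p q : ℝ} (hp : 0 < p) (hpq : p ≤ q)
    (hs : sin (p * π) ≠ 0) : IntegrableOn (fun l => muDensity p q l / l) (Ioc 0 1) := by
  set C := p / q * 3 / (π * sin (p * π) ^ 2)
  have hg : IntegrableOn (fun l : ℝ => C * l ^ (p - 1)) (Ioc 0 1) := by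
    have := intervalIntegral.intervalIntegrable_rpow' (show -1 < p - 1 by linarith)
      (a := 0) (b := 1)
    rw [intervalIntegrable_iff, uIoc_of_le zero_le_one] at this
    exact this.const_mul C
  refine hg.mono' ((measurable_muDensity p q).div measurable_id).aestronglyMeasurable
    (ae_restrict_of_forall_mem measurableSet_Ioc fun l ⟨hl, hl1⟩ => ?_)
  rw [norm_div, norm_eq_abs, norm_of_nonneg hl.le, rpow_sub_one hl.ne', ← mul_div_assoc]
  gcongr
  exact abs_muDensity_le_of_le_one hp.le hpq hs hl hl1

lemma integrableOn_muDensity_div_sq_add_one {p q : ℝ} (hp : 0 < p) (hpq : p ≤ q)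
    (hqp : q < p + 1) (hs : sin (p * π) ≠ 0) :
    IntegrableOn (fun l => muDensity p q l / (l ^ 2 + 1)) (Ioi 0) := by
  have hmeas : Measurable fun l => muDensity p q l / (l ^ 2 + 1) := by
    have := measurable_muDensity p q
    fun_prop
  rw [← Ioc_union_Ioi_eq_Ioi zero_le_one]
  refine IntegrableOn.union ?_ ?_
  · refine Integrable.mono (integrableOn_muDensity_div_self hp hpq hs)
      hmeas.aestronglyMeasurable
      (ae_restrict_of_forall_mem measurableSet_Ioc fun l ⟨hl, hl1⟩ => ?_)
    rw [norm_div, norm_div, norm_of_nonneg hl.le, norm_of_nonneg (by positivity : 0 ≤ l ^ 2 + 1)]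
    gcongr
    nlinarith
  · set C := p / q * 3 / (π * sin (p * π) ^ 2)
    have hg : IntegrableOn (fun l : ℝ => C * l ^ (q - p - 2)) (Ioi 1) :=
      (integrableOn_Ioi_rpow_of_lt (by linarith) one_pos).const_mul C
    refine hg.mono' hmeas.aestronglyMeasurable
      (ae_restrict_of_forall_mem measurableSet_Ioi fun l hl => ?_)
    have hl0 : 0 < l := one_pos.trans hl
    rw [norm_div, norm_eq_abs, norm_of_nonneg (by positivity), rpow_sub hl0, rpow_two,
      ← mul_div_assoc]
    have hbound := abs_muDensity_le_of_one_le hp.le hpq hs hl.le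
    exact div_le_div₀ ((abs_nonneg _).trans hbound) hbound (by positivity) (by linarith)

theorem stmt_17 (p q : ℝ) (hp : 0 < p) (hpq : p ≤ q) (hq : q ≤ 1) (hp1 : p < 1)
    (μ' : ℝ → ℝ)
    (hμ : ∀ l : ℝ, μ' l =
      p / q * (l ^ (p + q) * Real.sin ((q - p) * π) - l ^ q * Real.sin (q * π)
          + l ^ p * Real.sin (p * π)) /
        (π * (l ^ (2 * p) - 2 * l ^ p * Real.cos (p * π) + 1))) :
    (∀ l : ℝ, 0 < l → 0 ≤ μ' l) ∧
      MeasureTheory.IntegrableOn (fun l => μ' l / l) (Set.Ioc 0 1) ∧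
      MeasureTheory.IntegrableOn (fun l => μ' l / (l ^ 2 + 1)) (Set.Ioi 0) := by
  obtain rfl : μ' = muDensity p q := funext hμ
  have hs : sin (p * π) ≠ 0 := (sin_mul_pi_pos hp hp1).ne'
  exact ⟨fun l hl => muDensity_nonneg hp hpq hq hp1 hl,
    integrableOn_muDensity_div_self hp hpq hs,
    integrableOn_muDensity_div_sq_add_one hp hpq (by linarith) hs⟩
end
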